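/- arXiv:0704.0969 — 3 statements merged into one kernel-verified Lean document; each statement's English description precedes it below -/
import Mathlib

section
/- Let a : ℕ → ℕ → ℂ with ∑_{i,j} |a i j|² < ∞ and a not identically zero. Then the following are equivalent: (1) there exist square-summable sequences x, y : ℕ → ℂ with a i j = x i * conj (y j) for all i, j; (2) every 2×2 minor of a vanishes, i.e. for all i, j, k, l, a i l * a j k = a i k * a j l. -/
/-! If the 2×2 minors of `a` vanish and `a i₀ j₀ ≠ 0`, then `a i j = a i j₀ · (a i₀ j / a i₀ j₀)`,
i.e. `a` is the outer product of its column `j₀` and a rescaled row `i₀`; both are square-summable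
because they are slices of the square-summable matrix `a`. -/

open ComplexConjugate

theorem memℓp_two_of_summable_norm_sq {α : Type*} {E : α → Type*} [∀ i, NormedAddCommGroup (E i)]
    {f : ∀ i, E i} (hf : Summable fun i => ‖f i‖ ^ 2) : Memℓp f 2 :=
  memℓp_gen (by simpa only [ENNReal.toReal_ofNat, Real.rpow_two] using hf)

section Minors

variable {ι κ R : Type*}

def VanishingMinors [Mul R] (a : ι → κ → R) : Prop :=
  ∀ i j k l, a i l * a j k = a i k * a j l

theorem vanishingMinors_of_eq_mul [CommSemiring R] {a : ι → κ → R} {x : ι → R} {y : κ → R}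
    (h : ∀ i j, a i j = x i * y j) : VanishingMinors a := by
  intro i j k l
  simp only [h]
  ring

theorem VanishingMinors.eq_mul_inv_mul [Field R] {a : ι → κ → R} (h : VanishingMinors a)
    {i₀ : ι} {j₀ : κ} (h₀ : a i₀ j₀ ≠ 0) (i : ι) (j : κ) :
    a i j = a i j₀ * ((a i₀ j₀)⁻¹ * a i₀ j) := by
  field_simp
  linear_combination h i i₀ j₀ j

end Minors

theorem stmt_1 (a : ℕ → ℕ → ℂ)
    (hsum : Summable (fun p : ℕ × ℕ => ‖a p.1 p.2‖ ^ 2))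
    (hne : ∃ i j, a i j ≠ 0) :
    (∃ x y : ℕ → ℂ, Memℓp x 2 ∧ Memℓp y 2 ∧
        ∀ i j, a i j = x i * (starRingEnd ℂ) (y j)) ↔
      (∀ i j k l, a i l * a j k = a i k * a j l) := by
  refine ⟨fun ⟨x, y, _, _, h⟩ => vanishingMinors_of_eq_mul h, fun hminors => ?_⟩
  obtain ⟨i₀, j₀, h₀⟩ := hne
  have hcol : Memℓp (fun i => a i j₀) 2 :=
    memℓp_two_of_summable_norm_sq (hsum.prod_symm.prod_factor j₀)
  have hrow : Memℓp (fun j => a i₀ j) 2 := memℓp_two_of_summable_norm_sq (hsum.prod_factor i₀)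
  refine ⟨fun i => a i j₀, fun j => conj ((a i₀ j₀)⁻¹ * a i₀ j), hcol,
    (hrow.const_mul _).star_mem, fun i j => ?_⟩
  rw [Complex.conj_conj]
  exact VanishingMinors.eq_mul_inv_mul hminors h₀ i j
end

section
/- Let a : ℕ → ℕ → ℂ be square-summable (∑_{i,j} |a i j|² < ∞), and let M be the associated bounded linear operator on ℓ²(ℕ,ℂ) defined by (M x) i = ∑ⱼ a i j * x j. Then M is a compact operator. -/
/-!
The truncations `P_s f = ∑ i ∈ s, single i (f i)` of `ℓᵖ` (`p < ∞`) are compact, and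
`‖(M - P_s M) x‖ ≤ ‖c - P_s c‖ ‖x‖` whenever `M` is bounded coordinatewise by `‖(M x) i‖ ≤ c i ‖x‖`
with `c ∈ ℓᵖ`; since `P_s c → c`, `P_s M → M` in operator norm and `M` is compact. For the matrix
operator, Cauchy–Schwarz gives such a bound with `c i` the `ℓ²`-norm of the `i`-th row, and
`c ∈ ℓ²` is exactly the square-summability of the entries.
-/

open scoped ENNReal
open Filter Topology

theorem memℓp_two_iff_summable_sq {α : Type*} {E : α → Type*} [∀ i, NormedAddCommGroup (E i)]
    {f : ∀ i, E i} : Memℓp f 2 ↔ Summable fun i => ‖f i‖ ^ 2 := by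
  simpa using memℓp_gen_iff (p := 2) (by norm_num)

noncomputable section

namespace lp

theorem norm_sq_eq_tsum {α : Type*} {E : α → Type*} [∀ i, NormedAddCommGroup (E i)]
    (f : lp E 2) : ‖f‖ ^ 2 = ∑' i, ‖f i‖ ^ 2 := by
  simpa using lp.norm_rpow_eq_tsum (p := 2) (by norm_num) f

theorem norm_tsum_mul_le {α 𝕜 : Type*} [RCLike 𝕜] {p q : ℝ≥0∞} [Fact (1 ≤ p)] [Fact (1 ≤ q)]
    [p.HolderConjugate q] (f : lp (fun _ : α => 𝕜) p) (g : lp (fun _ : α => 𝕜) q) :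
    ‖∑' i, f i * g i‖ ≤ ‖f‖ * ‖g‖ := by
  let D := lp.dualPairing p q (fun _ : α => ContinuousLinearMap.mul 𝕜 𝕜) (K := 1)
    fun _ => ContinuousLinearMap.opNorm_mul_le 𝕜 𝕜
  calc ‖∑' i, f i * g i‖ = ‖D f g‖ := rfl
    _ ≤ ‖D‖ * ‖f‖ * ‖g‖ := D.le_opNorm₂ f g
    _ ≤ 1 * ‖f‖ * ‖g‖ := by gcongr; exact lp.norm_dualPairing _ _
    _ = ‖f‖ * ‖g‖ := by rw [one_mul]

variable {α 𝕜 : Type*} {E : α → Type*} {p : ℝ≥0∞} [NontriviallyNormedField 𝕜]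
  [∀ i, NormedAddCommGroup (E i)] [∀ i, NormedSpace 𝕜 (E i)] [Fact (1 ≤ p)]
  {X : Type*} [SeminormedAddCommGroup X] [NormedSpace 𝕜 X]

section Truncation

variable [DecidableEq α]

variable (𝕜 E p) in
def truncation (s : Finset α) : lp E p →L[𝕜] lp E p :=
  ∑ i ∈ s, singleContinuousLinearMap 𝕜 E p i ∘L evalCLM 𝕜 E p i

theorem truncation_apply (s : Finset α) (f : lp E p) :
    truncation 𝕜 E p s f = ∑ i ∈ s, lp.single p i (f i) := by
  simp only [truncation, sum_apply, ContinuousLinearMap.comp_apply, singleContinuousLinearMap_apply]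
  rfl

theorem coeFn_sub_truncation (s : Finset α) (f : lp E p) (i : α) :
    (f - truncation 𝕜 E p s f) i = if i ∈ s then 0 else f i := by
  simp only [truncation_apply, coeFn_sub, coeFn_sum, lp.coeFn_single, Pi.sub_apply,
    Finset.sum_apply, Finset.sum_pi_single]
  split_ifs <;> simp

theorem tendsto_truncation (hp : p ≠ ∞) (f : lp E p) :
    Tendsto (fun s : Finset α => truncation 𝕜 E p s f) atTop (𝓝 f) := by
  simp only [truncation_apply]
  exact lp.hasSum_single hp f

theorem isCompactOperator_truncation [∀ i, ProperSpace (E i)] (s : Finset α) :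
    IsCompactOperator (truncation 𝕜 E p s) := by
  rw [truncation, FunLike.coe_sum]
  exact Finset.sum_induction _ IsCompactOperator (fun _ _ => IsCompactOperator.add)
    isCompactOperator_zero fun i _ => by
      rw [ContinuousLinearMap.coe_comp]
      exact (isCompactOperator_of_locallyCompactSpace_rng _).comp_clm (evalCLM 𝕜 E p i)

theorem norm_sub_truncation_comp_le (M : X →L[𝕜] lp E p) (c : lp (fun _ : α => ℝ) p)
    (hM : ∀ x i, ‖M x i‖ ≤ c i * ‖x‖) (s : Finset α) :
    ‖M - truncation 𝕜 E p s ∘L M‖ ≤ ‖c - truncation ℝ _ p s c‖ := by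
  refine ContinuousLinearMap.opNorm_le_bound _ (norm_nonneg _) fun x => ?_
  have hp : p ≠ 0 := (zero_lt_one.trans_le Fact.out).ne'
  calc ‖(M - truncation 𝕜 E p s ∘L M) x‖ ≤ ‖‖x‖ • (c - truncation ℝ _ p s c)‖ := by
        refine lp.norm_mono hp fun i => ?_
        rw [sub_apply, ContinuousLinearMap.comp_apply, coeFn_sub_truncation,
          coeFn_smul, Pi.smul_apply, coeFn_sub_truncation]
        split_ifs
        · simp
        · exact (hM x i).trans <| by
            rw [smul_eq_mul, norm_mul, norm_norm, mul_comm]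
            gcongr
            exact Real.le_norm_self _
    _ = ‖c - truncation ℝ _ p s c‖ * ‖x‖ := by rw [norm_smul, norm_norm, mul_comm]

end Truncation

theorem isCompactOperator_of_norm_apply_le [∀ i, ProperSpace (E i)] (hp : p ≠ ∞)
    (M : X →L[𝕜] lp E p) (c : lp (fun _ : α => ℝ) p) (hM : ∀ x i, ‖M x i‖ ≤ c i * ‖x‖) :
    IsCompactOperator M := by
  classical
  refine isCompactOperator_of_tendsto (l := atTop) (F := fun s => truncation 𝕜 E p s ∘L M) ?_
    (.of_forall fun s => (isCompactOperator_truncation s).comp_clm M)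
  rw [tendsto_iff_norm_sub_tendsto_zero]
  refine squeeze_zero (fun _ => norm_nonneg _) (fun s => ?_)
    (tendsto_iff_norm_sub_tendsto_zero.1 (tendsto_truncation (𝕜 := ℝ) hp c))
  rw [norm_sub_rev, norm_sub_rev _ c]
  exact norm_sub_truncation_comp_le M c hM s

end lp

end

theorem stmt_4 (a : ℕ → ℕ → ℂ)
    (hsum : Summable (fun p : ℕ × ℕ => ‖a p.1 p.2‖ ^ 2))
    (M : lp (fun _ : ℕ => ℂ) 2 →L[ℂ] lp (fun _ : ℕ => ℂ) 2)
    (hM : ∀ (x : lp (fun _ : ℕ => ℂ) 2) (i : ℕ),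
      (M x : ∀ _ : ℕ, ℂ) i = ∑' j, a i j * (x : ∀ _ : ℕ, ℂ) j) :
    IsCompactOperator M := by
  let row (i : ℕ) : lp (fun _ : ℕ => ℂ) 2 :=
    ⟨a i, memℓp_two_iff_summable_sq.2 (hsum.prod_factor i)⟩
  have hrow : Memℓp (fun i => ‖row i‖) 2 := memℓp_two_iff_summable_sq.2 <| by
    simpa only [norm_norm, lp.norm_sq_eq_tsum] using
      ((summable_prod_of_nonneg fun _ => by positivity).1 hsum).2
  refine lp.isCompactOperator_of_norm_apply_le ENNReal.ofNat_ne_top M ⟨_, hrow⟩ fun x i => ?_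
  rw [hM]
  exact lp.norm_tsum_mul_le (row i) x
end

section
/- Let a : ℕ → ℕ → ℂ satisfy ∑_{i,j} |a i j|² = 1, and suppose all 2×2 minors of a vanish. Then there exist unit vectors x, y ∈ ℓ²(ℕ,ℂ) such that a i j = x i * conj (y j) for all i, j. -/
/-!
Fix an entry `a i₀ j₀ ≠ 0`. The vanishing minor through rows `i, i₀` and columns `j₀, j` gives
`a i j = a i j₀ * (a i₀ j / a i₀ j₀)`, so `a` is the outer product of a column and a row of
itself; both are square-summable, and the total mass `1` factors as the product of their masses.
Dividing the column by its norm and multiplying the row by the same norm makes both unit vectors.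
-/

section

variable {𝕜 ι κ : Type*}

lemma memℓp_two_of_summable_sq {E : Type*} [NormedAddCommGroup E] {f : ι → E}
    (hf : Summable fun i => ‖f i‖ ^ 2) : Memℓp f 2 :=
  memℓp_gen (by simpa only [ENNReal.toReal_ofNat, Real.rpow_ofNat] using hf)

lemma tsum_tsum_norm_sq_mul [NormedDivisionRing 𝕜] (u : ι → 𝕜) (v : κ → 𝕜) :
    ∑' i, ∑' j, ‖u i * v j‖ ^ 2 = (∑' i, ‖u i‖ ^ 2) * ∑' j, ‖v j‖ ^ 2 := by
  simp only [norm_mul, mul_pow, tsum_mul_left, tsum_mul_right]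

lemma eq_mul_div_of_minors_eq [Field 𝕜] {a : ι → κ → 𝕜}
    (hminor : ∀ i j k l, a i l * a j k = a i k * a j l) {i₀ : ι} {j₀ : κ} (h : a i₀ j₀ ≠ 0)
    (i : ι) (j : κ) : a i j = a i j₀ * (a i₀ j / a i₀ j₀) := by
  rw [← mul_div_assoc, eq_div_iff h, hminor i i₀ j₀ j]

lemma exists_summable_sq_factorization [NormedField 𝕜] {a : ι → κ → 𝕜}
    (hsum : Summable fun p : ι × κ => ‖a p.1 p.2‖ ^ 2)
    (hminor : ∀ i j k l, a i l * a j k = a i k * a j l) {i₀ : ι} {j₀ : κ} (h : a i₀ j₀ ≠ 0) :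
    ∃ (u : ι → 𝕜) (v : κ → 𝕜), (Summable fun i => ‖u i‖ ^ 2) ∧
      (Summable fun j => ‖v j‖ ^ 2) ∧ a = fun i j => u i * v j := by
  refine ⟨fun i => a i j₀, fun j => a i₀ j / a i₀ j₀, hsum.prod_symm.prod_factor j₀, ?_,
    funext₂ (eq_mul_div_of_minors_eq hminor h)⟩
  simpa only [norm_div, div_pow] using (hsum.prod_factor i₀).div_const (‖a i₀ j₀‖ ^ 2)

lemma exists_unit_mul_conj_of_tsum_mul_eq_one [RCLike 𝕜] {u : ι → 𝕜} {v : κ → 𝕜}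
    (hu : Summable fun i => ‖u i‖ ^ 2) (hv : Summable fun j => ‖v j‖ ^ 2)
    (h : (∑' i, ‖u i‖ ^ 2) * ∑' j, ‖v j‖ ^ 2 = 1) :
    ∃ (x : ι → 𝕜) (y : κ → 𝕜), Memℓp x 2 ∧ Memℓp y 2 ∧
      (∑' i, ‖x i‖ ^ 2 = 1) ∧ (∑' j, ‖y j‖ ^ 2 = 1) ∧
      ∀ i j, u i * v j = x i * (starRingEnd 𝕜) (y j) := by
  set s := ∑' i, ‖u i‖ ^ 2
  have hs : 0 < s := (tsum_nonneg fun i => by positivity).lt_of_ne' (left_ne_zero_of_mul_eq_one h)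
  set t := √s
  have ht : (t : 𝕜) ≠ 0 := by exact_mod_cast (Real.sqrt_pos.mpr hs).ne'
  have hx : (fun i => ‖u i / t‖ ^ 2) = fun i => ‖u i‖ ^ 2 / s := by
    simp only [norm_div, RCLike.norm_ofReal, abs_of_nonneg (Real.sqrt_nonneg s), div_pow,
      Real.sq_sqrt hs.le, t]
  have hy : (fun j => ‖(starRingEnd 𝕜) (v j) * t‖ ^ 2) = fun j => ‖v j‖ ^ 2 * s := by
    simp only [norm_mul, RCLike.norm_conj, RCLike.norm_ofReal,
      abs_of_nonneg (Real.sqrt_nonneg s), mul_pow, Real.sq_sqrt hs.le, t]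
  refine ⟨fun i => u i / t, fun j => (starRingEnd 𝕜) (v j) * t, ?_, ?_, ?_, ?_, ?_⟩
  · exact memℓp_two_of_summable_sq (hx ▸ hu.div_const s)
  · exact memℓp_two_of_summable_sq (hy ▸ hv.mul_right s)
  · rw [hx, tsum_div_const, div_self hs.ne']
  · rw [hy, tsum_mul_right, mul_comm, h]
  · intro i j
    simp only [map_mul, RCLike.conj_conj, RCLike.conj_ofReal]
    field_simp

end

theorem stmt_19 (a : ℕ → ℕ → ℂ)
    (hsum : Summable (fun p : ℕ × ℕ => ‖a p.1 p.2‖ ^ 2))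
    (hnorm : ∑' i, ∑' j, ‖a i j‖ ^ 2 = 1)
    (hminor : ∀ i j k l, a i l * a j k = a i k * a j l) :
    ∃ x y : ℕ → ℂ, Memℓp x 2 ∧ Memℓp y 2 ∧
      (∑' i, ‖x i‖ ^ 2 = 1) ∧ (∑' j, ‖y j‖ ^ 2 = 1) ∧
      ∀ i j, a i j = x i * (starRingEnd ℂ) (y j) := by
  obtain ⟨i₀, j₀, hne⟩ : ∃ i j, a i j ≠ 0 := by
    by_contra! h
    simp [h] at hnorm
  obtain ⟨u, v, hu, hv, rfl⟩ := exists_summable_sq_factorization hsum hminor hne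
  rw [tsum_tsum_norm_sq_mul] at hnorm
  exact exists_unit_mul_conj_of_tsum_mul_eq_one hu hv hnorm
end
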